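/- Let a : [0,∞) → [0,∞) be right-continuous and nondecreasing with a(0) = 0, let c be its right inverse c(t) = inf{s ≥ 0 : a(s) > t}, assumed finite for all t ≥ 0, let f be a nonnegative Borel function on [0,∞), and let F : [0,∞) → [0,∞) be right-continuous and nondecreasing. Then ∫_{[0,∞)} f(s) dF(a(s)) = ∫_{[0,∞)} f(c(s-)) dF(s), with the convention that the contribution at 0 is f(0)F(0). -/

import Mathlib

open Set Filter MeasureTheory Topology Function
open scoped ENNReal

/-!
For `b ≥ 0` one has `c(t-) ≤ b ↔ t ≤ A b`: `c(t-) ≤ b` means `c u ≤ b` for all `u < t`, and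
`u < A b → c u ≤ b → u ≤ A b`, the second implication by right-continuity of `A`. Hence the
image of `dF` under `s ↦ c(s-)` gives each half-line `(-∞, b]` the mass `F (A b)`, exactly as
`dF(A)` does, so the two measures coincide and the formula is the change of variables for an
image measure.
-/

theorem MeasureTheory.Measure.ext_of_Iic_of_ne_top {α : Type*} [TopologicalSpace α]
    {_ : MeasurableSpace α} [SecondCountableTopology α] [LinearOrder α] [OrderTopology α]
    [BorelSpace α] [NoMinOrder α] (μ ν : Measure α) (hμ : ∀ b, μ (Iic b) ≠ ∞)
    (h : ∀ b, μ (Iic b) = ν (Iic b)) : μ = ν := by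
  refine μ.ext_of_Ioc' ν
    (fun a b _ => ne_top_of_le_ne_top (hμ b) (measure_mono Ioc_subset_Iic_self)) fun a b hab => ?_
  have hsub : Iic a ⊆ Iic b := Iic_subset_Iic.2 hab.le
  rw [← Iic_sdiff_Iic, measure_sdiff hsub nullMeasurableSet_Iic (hμ a),
    measure_sdiff hsub nullMeasurableSet_Iic (h a ▸ hμ a), h a, h b]

theorem Monotone.leftLim_le_iff {α β : Type*} [LinearOrder α] [TopologicalSpace α]
    [OrderTopology α] [ConditionallyCompleteLinearOrder β] [TopologicalSpace β] [OrderTopology β]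
    {g : α → β} (hg : Monotone g) {t : α} [(𝓝[<] t).NeBot] {b : β} :
    leftLim g t ≤ b ↔ ∀ u < t, g u ≤ b :=
  ⟨fun h _ hu => (hg.le_leftLim hu).trans h,
    fun h => _root_.le_of_tendsto (hg.tendsto_leftLim t) (eventually_nhdsWithin_of_forall h)⟩

namespace StieltjesFunction

section VanishingOnNegatives

variable {G : StieltjesFunction ℝ} (hG : ∀ t < 0, G t = 0)
include hG

theorem tendsto_atBot_zero_of_forall_neg : Tendsto G atBot (𝓝 0) :=
  tendsto_const_nhds.congr' <| (eventually_lt_atBot 0).mono fun t ht => (hG t ht).symm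

theorem measure_Iic_of_forall_neg (b : ℝ) : G.measure (Iic b) = ENNReal.ofReal (G b) := by
  simpa using G.measure_Iic (tendsto_atBot_zero_of_forall_neg hG) b

theorem measure_restrict_Ici_zero_of_forall_neg : G.measure.restrict (Ici 0) = G.measure := by
  have hlim : leftLim G 0 = 0 :=
    leftLim_eq_of_tendsto <|
      tendsto_const_nhds.congr' <| eventually_nhdsWithin_of_forall fun t ht => (hG t ht).symm
  refine Measure.restrict_eq_self_of_ae_mem (ae_iff.2 ?_)
  simp only [mem_Ici, not_le]
  exact (G.measure_Iio (tendsto_atBot_zero_of_forall_neg hG) 0).trans (by simp [hlim])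

end VanishingOnNegatives

noncomputable def rightInv (A : StieltjesFunction ℝ) (t : ℝ) : ℝ :=
  sInf {s | 0 ≤ s ∧ t < A s}

variable {A : StieltjesFunction ℝ} {t b : ℝ}

theorem rightInv_le_of_lt (hb : 0 ≤ b) (h : t < A b) : A.rightInv t ≤ b :=
  csInf_le ⟨0, fun _ hs => hs.1⟩ ⟨hb, h⟩

section Unbounded

variable (hA : ∀ t, ∃ s, 0 ≤ s ∧ t < A s)
include hA

theorem rightInv_mono : Monotone A.rightInv := fun _ v huv =>
  csInf_le_csInf ⟨0, fun _ hs => hs.1⟩ (hA v) fun _ hs => ⟨hs.1, huv.trans_lt hs.2⟩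

theorem le_of_rightInv_le (h : A.rightInv t ≤ b) : t ≤ A b := by
  have hlt : ∀ b' > b, t < A b' := by
    intro b' hb'
    obtain ⟨s, ⟨-, hts⟩, hsb'⟩ := (csInf_lt_iff ⟨0, fun _ hs => hs.1⟩ (hA t)).1 (h.trans_lt hb')
    exact hts.trans_le (A.mono hsb'.le)
  exact ge_of_tendsto ((A.right_continuous b).mono Ioi_subset_Ici_self).tendsto
    (eventually_nhdsWithin_of_forall fun b' hb' => (hlt b' hb').le)

theorem leftLim_rightInv_le_iff (hb : 0 ≤ b) : leftLim A.rightInv t ≤ b ↔ t ≤ A b := by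
  rw [(rightInv_mono hA).leftLim_le_iff]
  exact ⟨fun h => forall_lt_imp_le_iff_le_of_dense.1 fun u hu => le_of_rightInv_le hA (h u hu),
    fun h u hu => rightInv_le_of_lt hb (hu.trans_le h)⟩

theorem preimage_leftLim_rightInv_Iic (hb : 0 ≤ b) :
    leftLim A.rightInv ⁻¹' Iic b = Iic (A b) :=
  Set.ext fun _ => leftLim_rightInv_le_iff hA hb

theorem leftLim_rightInv_nonneg : 0 ≤ leftLim A.rightInv t :=
  (Real.sInf_nonneg fun _ hs => hs.1).trans ((rightInv_mono hA).le_leftLim (sub_one_lt t))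

theorem map_leftLim_rightInv {F H : StieltjesFunction ℝ} (hF : ∀ t < 0, F t = 0)
    (hH : ∀ t, H t = if 0 ≤ t then F (A t) else 0) :
    F.measure.map (leftLim A.rightInv) = H.measure := by
  have hH_neg : ∀ t < 0, H t = 0 := fun t ht => by rw [hH, if_neg ht.not_ge]
  have hmeas : Measurable (leftLim A.rightInv) := (rightInv_mono hA).leftLim.measurable
  refine (Measure.ext_of_Iic_of_ne_top _ _ (fun b => ?_) fun b => ?_).symm
  · simp [measure_Iic_of_forall_neg hH_neg]
  rw [measure_Iic_of_forall_neg hH_neg, Measure.map_apply hmeas measurableSet_Iic]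
  rcases le_or_gt 0 b with hb | hb
  · rw [preimage_leftLim_rightInv_Iic hA hb, measure_Iic_of_forall_neg hF, hH, if_pos hb]
  · have : leftLim A.rightInv ⁻¹' Iic b = ∅ :=
      eq_empty_of_forall_notMem fun s hs => hb.not_ge ((leftLim_rightInv_nonneg hA).trans hs)
    rw [this, measure_empty, hH_neg b hb, ENNReal.ofReal_zero]

end Unbounded

end StieltjesFunction

theorem stmt_7_general (A F FA : StieltjesFunction ℝ)
    (hFneg : ∀ t : ℝ, t < 0 → F t = 0)
    (hFA : ∀ t : ℝ, FA t = if 0 ≤ t then F (A t) else 0)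
    (c : ℝ → ℝ) (hc : ∀ t, c t = sInf {s : ℝ | 0 ≤ s ∧ t < A s})
    (hfin : ∀ t : ℝ, 0 ≤ t → ∃ s, 0 ≤ s ∧ t < A s)
    (f : ℝ → ENNReal) (hf : Measurable f) :
    ∫⁻ s in Ici (0 : ℝ), f s ∂FA.measure
      = ∫⁻ s in Ici (0 : ℝ), f (Function.leftLim c s) ∂F.measure := by
  obtain rfl : c = A.rightInv := funext hc
  have hA : ∀ t, ∃ s, 0 ≤ s ∧ t < A s := fun t => by
    obtain ⟨s, hs, hts⟩ := hfin (max t 0) (le_max_right t 0)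
    exact ⟨s, hs, (le_max_left t 0).trans_lt hts⟩
  have hFA_neg : ∀ t < 0, FA t = 0 := fun t ht => by rw [hFA, if_neg ht.not_ge]
  rw [FA.measure_restrict_Ici_zero_of_forall_neg hFA_neg,
    F.measure_restrict_Ici_zero_of_forall_neg hFneg,
    ← StieltjesFunction.map_leftLim_rightInv hA hFneg hFA,
    lintegral_map hf (StieltjesFunction.rightInv_mono hA).leftLim.measurable]

/-- change-of-variables formula
`∫_{[0,∞)} f(s) dF(a(s)) = ∫_{[0,∞)} f(c(s-)) dF(s)` where `a` is
right-continuous nondecreasing with `a(0) = 0` (extended by `0` on the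
negative half-line), `c` is its right inverse (finite everywhere), `f ≥ 0` is
Borel, and `F` is right-continuous nondecreasing (with `F = 0` on `(-∞,0)`,
encoding the convention that the contribution at `0` is `f(0)F(0)`). -/
theorem stmt_7 (A F FA : StieltjesFunction ℝ)
    (hAneg : ∀ t : ℝ, t ≤ 0 → A t = 0)
    (hFneg : ∀ t : ℝ, t < 0 → F t = 0)
    (hFA : ∀ t : ℝ, FA t = if 0 ≤ t then F (A t) else 0)
    (c : ℝ → ℝ) (hc : ∀ t, c t = sInf {s : ℝ | 0 ≤ s ∧ t < A s})
    (hfin : ∀ t : ℝ, 0 ≤ t → ∃ s, 0 ≤ s ∧ t < A s)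
    (f : ℝ → ENNReal) (hf : Measurable f) :
    ∫⁻ s in Ici (0 : ℝ), f s ∂FA.measure
      = ∫⁻ s in Ici (0 : ℝ), f (Function.leftLim c s) ∂F.measure :=
  stmt_7_general A F FA hFneg hFA c hc hfin f hf
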